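/- For $u\in L^q(\mathbb{R}^N,\mathbb{R}^d)$, $q\ge 1$, define $\hat A_{u,q}(\mathbb{R}^N):=\limsup_{\varepsilon\to 0^+}\int_{B_1(0)}\int_{\mathbb{R}^N}\frac{1}{\varepsilon|z|}|u(x+\varepsilon z)-u(x)|^q\,dx\,dz$ and $\hat B_{u,q}(\mathbb{R}^N):=\limsup_{\varepsilon\to 0^+}\sup_{\vec k\in S^{N-1}}\int_{\mathbb{R}^N}\frac{1}{\varepsilon}|u(x+\varepsilon\vec k)-u(x)|^q\,dx$. Then $$\frac{\hat A_{u,q}(\mathbb{R}^N)}{\mathcal{L}^N(B_1(0))}\le \hat B_{u,q}(\mathbb{R}^N)\le 2^{N+q}\,\frac{\hat A_{u,q}(\mathbb{R}^N)}{\mathcal{L}^N(B_1(0))}.$$ -/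

import Mathlib

/-!
Write `E(w) = ∫ |u(x + w) - u(x)|^q dx` for the translation energy. Each `z` in the unit ball is the
vector `z/|z|` of the sphere at the scale `ε|z| < ε`, which gives `Â ≤ |B₁| B̂`. Conversely, for a
unit vector `k` the triangle inequality for `|·|^q` gives `E(εk) ≤ 2^(q-1) (E(ε(k - z)) + E(εz))`.
Averaging over `z` in the ball `D` of radius `1/2` centred at `k/2`, which is invariant under
`z ↦ k - z`, lies in `B₁`, has volume `2^(-N) |B₁|` and on which `|z| < 1`, gives
`E(εk)/ε ≤ 2^(N+q) |B₁|⁻¹ ∫_{B₁} E(εz)/(ε|z|) dz`.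
-/

open MeasureTheory Metric Set Filter Topology Module
open scoped ENNReal

noncomputable section

theorem limsup_biSup_Ioo_le {α : Type*} [CompleteLattice α] (g : ℝ → α) (a : ℝ) :
    limsup (fun ε => ⨆ t ∈ Ioo a ε, g t) (𝓝[>] a) ≤ limsup g (𝓝[>] a) := by
  rw [(nhdsGT_basis a).limsup_eq_iInf_iSup (u := g)]
  refine le_iInf₂ fun δ hδ => ?_
  refine limsup_le_of_le (by isBoundedDefault) ?_
  filter_upwards [Ioo_mem_nhdsGT hδ] with ε hε
  exact biSup_mono fun t ht => ⟨ht.1, ht.2.trans hε.2⟩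

theorem ofReal_norm_sub_rpow_le {F : Type*} [SeminormedAddCommGroup F] {q : ℝ} (hq : 1 ≤ q)
    (a b c : F) :
    ENNReal.ofReal (‖a - c‖ ^ q) ≤
      2 ^ (q - 1) * (ENNReal.ofReal (‖a - b‖ ^ q) + ENNReal.ofReal (‖b - c‖ ^ q)) := by
  have hq0 : 0 ≤ q := zero_le_one.trans hq
  simp only [← ENNReal.ofReal_rpow_of_nonneg (norm_nonneg _) hq0]
  calc ENNReal.ofReal ‖a - c‖ ^ q ≤ (ENNReal.ofReal ‖a - b‖ + ENNReal.ofReal ‖b - c‖) ^ q := by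
        rw [← ENNReal.ofReal_add (norm_nonneg _) (norm_nonneg _)]
        gcongr
        exact norm_sub_le_norm_sub_add_norm_sub a b c
    _ ≤ _ := ENNReal.rpow_add_le_mul_rpow_add_rpow _ _ hq

theorem measurable_ofReal_norm_sub_rpow {α β F : Type*} [MeasurableSpace α] [MeasurableSpace β]
    [SeminormedAddCommGroup F] {v : β → F} (hv : StronglyMeasurable v) {f g : α → β}
    (hf : Measurable f) (hg : Measurable g) (q : ℝ) :
    Measurable fun a => ENNReal.ofReal (‖v (f a) - v (g a)‖ ^ q) :=
  (((hv.comp_measurable hf).sub (hv.comp_measurable hg)).norm.measurable.pow_const q).ennreal_ofReal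

section TranslationEnergy

variable {G F : Type*} [AddGroup G] [MeasurableSpace G] [SeminormedAddCommGroup F]

def translationEnergy (μ : Measure G) (q : ℝ) (v : G → F) (w : G) : ℝ≥0∞ :=
  ∫⁻ x, ENNReal.ofReal (‖v (x + w) - v x‖ ^ q) ∂μ

theorem translationEnergy_zero (μ : Measure G) {q : ℝ} (hq : q ≠ 0) (v : G → F) :
    translationEnergy μ q v 0 = 0 := by
  simp [translationEnergy, Real.zero_rpow hq]

variable [MeasurableAdd G] {μ : Measure G} [μ.IsAddRightInvariant]

theorem translationEnergy_congr_ae {u v : G → F} (huv : u =ᵐ[μ] v) (q : ℝ) :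
    translationEnergy μ q u = translationEnergy μ q v := by
  ext w
  refine lintegral_congr_ae ?_
  filter_upwards [(measurePreserving_add_right μ w).quasiMeasurePreserving.ae_eq_comp huv, huv]
    with x hxw hx
  simp only [Function.comp_apply] at hxw
  rw [hxw, hx]

theorem translationEnergy_add_le {v : G → F} (hv : AEStronglyMeasurable v μ) {q : ℝ} (hq : 1 ≤ q)
    (w w' : G) :
    translationEnergy μ q v (w + w') ≤
      2 ^ (q - 1) * (translationEnergy μ q v w + translationEnergy μ q v w') := by
  rw [translationEnergy_congr_ae hv.ae_eq_mk]
  set v' := hv.mk v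
  have hshift : translationEnergy μ q v' w' =
      ∫⁻ x, ENNReal.ofReal (‖v' (x + (w + w')) - v' (x + w)‖ ^ q) ∂μ := by
    rw [translationEnergy, ← lintegral_add_right_eq_self _ w]
    simp only [add_assoc]
  calc translationEnergy μ q v' (w + w')
      ≤ ∫⁻ x, 2 ^ (q - 1) * (ENNReal.ofReal (‖v' (x + (w + w')) - v' (x + w)‖ ^ q) +
          ENNReal.ofReal (‖v' (x + w) - v' x‖ ^ q)) ∂μ :=
        lintegral_mono fun x => ofReal_norm_sub_rpow_le hq _ _ _
    _ = 2 ^ (q - 1) * (translationEnergy μ q v' w' + translationEnergy μ q v' w) := by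
        rw [lintegral_const_mul' _ _ (by finiteness), lintegral_add_right _
          (measurable_ofReal_norm_sub_rpow hv.stronglyMeasurable_mk (measurable_add_const w)
            measurable_id' q), hshift]
        rfl
    _ = _ := by rw [add_comm]

theorem measurable_translationEnergy [MeasurableAdd₂ G] [SFinite μ] {v : G → F}
    (hv : AEStronglyMeasurable v μ) (q : ℝ) : Measurable (translationEnergy μ q v) := by
  rw [translationEnergy_congr_ae hv.ae_eq_mk]
  exact (measurable_ofReal_norm_sub_rpow hv.stronglyMeasurable_mk
    (measurable_snd.add measurable_fst) measurable_snd q).lintegral_prod_right'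

end TranslationEnergy

section

variable {E : Type*} [NormedAddCommGroup E] [NormedSpace ℝ E]

-- For `T` the translation energy of `u`, the `limsup`s as `ε → 0⁺` of `ballDiffQuot volume T` and
-- `sphereDiffQuot T` are `Â_{u,q}` and `B̂_{u,q}`.
def ballDiffQuot [MeasurableSpace E] (μ : Measure E) (T : E → ℝ≥0∞) (ε : ℝ) : ℝ≥0∞ :=
  ∫⁻ z in ball 0 1, T (ε • z) / ENNReal.ofReal (ε * ‖z‖) ∂μ

def sphereDiffQuot (T : E → ℝ≥0∞) (ε : ℝ) : ℝ≥0∞ :=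
  ⨆ (k : E) (_ : ‖k‖ = 1), T (ε • k) / ENNReal.ofReal ε

theorem div_le_biSup_sphereDiffQuot {T : E → ℝ≥0∞} (hT : T 0 = 0) {ε : ℝ} (hε : 0 < ε) {z : E}
    (hz : z ∈ ball (0 : E) 1) :
    T (ε • z) / ENNReal.ofReal (ε * ‖z‖) ≤ ⨆ t ∈ Ioo 0 ε, sphereDiffQuot T t := by
  rcases eq_or_ne z 0 with rfl | hz0
  · simp [hT] -- `T 0 / 0` would be `⊤` in `ℝ≥0∞` if `T 0 ≠ 0`
  have hnz : 0 < ‖z‖ := norm_pos_iff.2 hz0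
  have ht : ε * ‖z‖ ∈ Ioo 0 ε :=
    ⟨mul_pos hε hnz, mul_lt_of_lt_one_right hε (mem_ball_zero_iff.1 hz)⟩
  have hk : ‖‖z‖⁻¹ • z‖ = 1 := by rw [norm_smul, norm_inv, norm_norm, inv_mul_cancel₀ hnz.ne']
  have hsmul : ε • z = (ε * ‖z‖) • ‖z‖⁻¹ • z := by
    rw [smul_smul, mul_assoc, mul_inv_cancel₀ hnz.ne', mul_one]
  rw [hsmul]
  exact le_trans (le_iSup₂ (f := fun k (_ : ‖k‖ = 1) =>
    T ((ε * ‖z‖) • k) / ENNReal.ofReal (ε * ‖z‖)) _ hk) (le_biSup (sphereDiffQuot T) ht)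

theorem ballDiffQuot_le [MeasurableSpace E] (μ : Measure E) {T : E → ℝ≥0∞} (hT : T 0 = 0) {ε : ℝ}
    (hε : 0 < ε) :
    ballDiffQuot μ T ε ≤ μ (ball 0 1) * ⨆ t ∈ Ioo 0 ε, sphereDiffQuot T t :=
  calc ballDiffQuot μ T ε ≤ ∫⁻ _ in ball (0 : E) 1, ⨆ t ∈ Ioo 0 ε, sphereDiffQuot T t ∂μ :=
        setLIntegral_mono measurable_const fun _ hz => div_le_biSup_sphereDiffQuot hT hε hz
    _ = _ := by rw [setLIntegral_const, mul_comm]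

theorem limsup_ballDiffQuot_div_le [MeasurableSpace E] [ProperSpace E] (μ : Measure E)
    [IsFiniteMeasureOnCompacts μ] {T : E → ℝ≥0∞} (hT : T 0 = 0) :
    limsup (ballDiffQuot μ T) (𝓝[>] 0) / μ (ball 0 1) ≤ limsup (sphereDiffQuot T) (𝓝[>] 0) := by
  refine ENNReal.div_le_of_le_mul' ?_
  calc limsup (ballDiffQuot μ T) (𝓝[>] 0)
      ≤ limsup (fun ε => μ (ball 0 1) * ⨆ t ∈ Ioo 0 ε, sphereDiffQuot T t) (𝓝[>] 0) :=
        limsup_le_limsup (eventually_nhdsWithin_of_forall fun _ hε => ballDiffQuot_le μ hT hε)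
    _ = μ (ball 0 1) * limsup (fun ε => ⨆ t ∈ Ioo 0 ε, sphereDiffQuot T t) (𝓝[>] 0) :=
        ENNReal.limsup_const_mul_of_ne_top measure_ball_lt_top.ne
    _ ≤ _ := mul_le_mul_right (limsup_biSup_Ioo_le _ 0) _

theorem preimage_sub_left_ball_half (k : E) (r : ℝ) :
    (k - ·) ⁻¹' ball ((2⁻¹ : ℝ) • k) r = ball ((2⁻¹ : ℝ) • k) r := by
  ext z
  rw [mem_preimage, mem_ball, mem_ball, dist_eq_norm, dist_eq_norm, ← norm_neg]
  congr! 2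
  module

theorem ball_half_subset_ball_zero_one {k : E} (hk : ‖k‖ = 1) :
    ball ((2⁻¹ : ℝ) • k) 2⁻¹ ⊆ ball 0 1 :=
  ball_subset_ball' (by norm_num [norm_smul, hk])

theorem zero_notMem_ball_half {k : E} (hk : ‖k‖ = 1) : (0 : E) ∉ ball ((2⁻¹ : ℝ) • k) 2⁻¹ := by
  simp [norm_smul, hk]

theorem le_ofReal_mul_div_of_mem_ball_half {T : E → ℝ≥0∞} {ε : ℝ} (hε : 0 < ε) {k : E}
    (hk : ‖k‖ = 1) {z : E} (hz : z ∈ ball ((2⁻¹ : ℝ) • k) 2⁻¹) :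
    T (ε • z) ≤ ENNReal.ofReal ε * (T (ε • z) / ENNReal.ofReal (ε * ‖z‖)) := by
  have hz0 : 0 < ‖z‖ := norm_pos_iff.2 (ne_of_mem_of_not_mem hz (zero_notMem_ball_half hk))
  have hz1 : ‖z‖ ≤ 1 := (mem_ball_zero_iff.1 (ball_half_subset_ball_zero_one hk hz)).le
  have hεz : ENNReal.ofReal (ε * ‖z‖) ≠ 0 := (ENNReal.ofReal_pos.2 (mul_pos hε hz0)).ne'
  calc T (ε • z) = ENNReal.ofReal (ε * ‖z‖) * (T (ε • z) / ENNReal.ofReal (ε * ‖z‖)) :=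
        (ENNReal.mul_div_cancel hεz ENNReal.ofReal_ne_top).symm
    _ ≤ _ := by gcongr; exact mul_le_of_le_one_right hε.le hz1

section

variable [MeasurableSpace E] [BorelSpace E]

theorem setLIntegral_ball_half_comp_sub_left (μ : Measure E) [μ.IsAddLeftInvariant]
    [μ.IsNegInvariant] (k : E) (r : ℝ) (f : E → ℝ≥0∞) :
    ∫⁻ z in ball ((2⁻¹ : ℝ) • k) r, f (k - z) ∂μ = ∫⁻ z in ball ((2⁻¹ : ℝ) • k) r, f z ∂μ := by
  conv_lhs => rw [← preimage_sub_left_ball_half k r]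
  exact (Measure.measurePreserving_sub_left μ k).setLIntegral_comp_preimage_emb
    (MeasurableEquiv.subLeft k).measurableEmbedding f _

theorem measure_ball_half_mul_le (μ : Measure E) [μ.IsAddLeftInvariant] [μ.IsNegInvariant]
    {S : E → ℝ≥0∞} (hS : Measurable S) {c : ℝ≥0∞} (hc : c ≠ ∞)
    (hsub : ∀ w w', S (w + w') ≤ c * (S w + S w')) (k : E) (r : ℝ) :
    μ (ball ((2⁻¹ : ℝ) • k) r) * S k ≤ 2 * c * ∫⁻ z in ball ((2⁻¹ : ℝ) • k) r, S z ∂μ :=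
  calc μ (ball ((2⁻¹ : ℝ) • k) r) * S k = ∫⁻ _ in ball ((2⁻¹ : ℝ) • k) r, S k ∂μ := by
        rw [setLIntegral_const, mul_comm]
    _ ≤ ∫⁻ z in ball ((2⁻¹ : ℝ) • k) r, c * (S (k - z) + S z) ∂μ :=
        lintegral_mono fun z => by simpa using hsub (k - z) z
    _ = c * (∫⁻ z in ball ((2⁻¹ : ℝ) • k) r, S (k - z) ∂μ +
          ∫⁻ z in ball ((2⁻¹ : ℝ) • k) r, S z ∂μ) := by
        rw [lintegral_const_mul' _ _ hc, lintegral_add_right _ hS]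
    _ = 2 * c * ∫⁻ z in ball ((2⁻¹ : ℝ) • k) r, S z ∂μ := by
        rw [setLIntegral_ball_half_comp_sub_left]
        ring

theorem measure_ball_half_mul_le_ballDiffQuot (μ : Measure E) [μ.IsAddLeftInvariant]
    [μ.IsNegInvariant] {T : E → ℝ≥0∞} (hT : Measurable T) {c : ℝ≥0∞} (hc : c ≠ ∞)
    (hsub : ∀ w w', T (w + w') ≤ c * (T w + T w')) {ε : ℝ} (hε : 0 < ε) {k : E} (hk : ‖k‖ = 1) :
    μ (ball ((2⁻¹ : ℝ) • k) 2⁻¹) * T (ε • k) ≤ 2 * c * (ENNReal.ofReal ε * ballDiffQuot μ T ε) :=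
  calc μ (ball ((2⁻¹ : ℝ) • k) 2⁻¹) * T (ε • k)
      ≤ 2 * c * ∫⁻ z in ball ((2⁻¹ : ℝ) • k) 2⁻¹, T (ε • z) ∂μ :=
        measure_ball_half_mul_le μ (S := fun z => T (ε • z)) (hT.comp (measurable_const_smul ε))
          hc (fun w w' => by simpa only [smul_add] using hsub (ε • w) (ε • w')) k _
    _ ≤ 2 * c * ∫⁻ z in ball ((2⁻¹ : ℝ) • k) 2⁻¹,
          ENNReal.ofReal ε * (T (ε • z) / ENNReal.ofReal (ε * ‖z‖)) ∂μ := by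
        gcongr 1
        exact setLIntegral_mono' measurableSet_ball fun z hz =>
          le_ofReal_mul_div_of_mem_ball_half hε hk hz
    _ ≤ 2 * c * (ENNReal.ofReal ε * ballDiffQuot μ T ε) := by
        rw [lintegral_const_mul' _ _ ENNReal.ofReal_ne_top]
        gcongr
        exact lintegral_mono_set (ball_half_subset_ball_zero_one hk)

variable [FiniteDimensional ℝ E] (μ : Measure E) [μ.IsAddHaarMeasure]

theorem measure_ball_zero_one_eq_two_pow_mul (k : E) :
    μ (ball 0 1) = 2 ^ finrank ℝ E * μ (ball ((2⁻¹ : ℝ) • k) 2⁻¹) := by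
  rw [Measure.addHaar_ball_of_pos μ ((2⁻¹ : ℝ) • k) (by norm_num : (0 : ℝ) < 2⁻¹), ← mul_assoc,
    ENNReal.ofReal_pow (by norm_num), ENNReal.ofReal_inv_of_pos (by norm_num), ENNReal.ofReal_ofNat,
    ← mul_pow, ENNReal.mul_inv_cancel (by norm_num) (by norm_num), one_pow, one_mul]

theorem measure_ball_mul_sphereDiffQuot_le {T : E → ℝ≥0∞} (hT : Measurable T) {c : ℝ≥0∞}
    (hc : c ≠ ∞) (hsub : ∀ w w', T (w + w') ≤ c * (T w + T w')) {ε : ℝ} (hε : 0 < ε) :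
    μ (ball 0 1) * sphereDiffQuot T ε ≤ 2 ^ finrank ℝ E * (2 * c) * ballDiffQuot μ T ε := by
  simp only [sphereDiffQuot, ENNReal.mul_iSup]
  refine iSup₂_le fun k hk => ?_
  have hε0 : ENNReal.ofReal ε ≠ 0 := (ENNReal.ofReal_pos.2 hε).ne'
  calc μ (ball 0 1) * (T (ε • k) / ENNReal.ofReal ε)
      = 2 ^ finrank ℝ E * (μ (ball ((2⁻¹ : ℝ) • k) 2⁻¹) * T (ε • k)) / ENNReal.ofReal ε := by
        rw [measure_ball_zero_one_eq_two_pow_mul μ k]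
        simp only [div_eq_mul_inv]
        ring
    _ ≤ 2 ^ finrank ℝ E * (2 * c * (ENNReal.ofReal ε * ballDiffQuot μ T ε)) / ENNReal.ofReal ε := by
        gcongr 2 ^ _ * ?_ / _
        exact measure_ball_half_mul_le_ballDiffQuot μ hT hc hsub hε hk
    _ = 2 ^ finrank ℝ E * (2 * c) * ballDiffQuot μ T ε := by
        rw [mul_left_comm (2 * c), ← mul_assoc, mul_right_comm _ (ENNReal.ofReal ε),
          ENNReal.mul_div_cancel_right hε0 ENNReal.ofReal_ne_top]
        ring

theorem limsup_sphereDiffQuot_le {T : E → ℝ≥0∞} (hT : Measurable T) {c : ℝ≥0∞} (hc : c ≠ ∞)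
    (hsub : ∀ w w', T (w + w') ≤ c * (T w + T w')) :
    limsup (sphereDiffQuot T) (𝓝[>] 0) ≤
      2 ^ finrank ℝ E * (2 * c) * (limsup (ballDiffQuot μ T) (𝓝[>] 0) / μ (ball 0 1)) := by
  have hK : (2 : ℝ≥0∞) ^ finrank ℝ E * (2 * c) ≠ ∞ := by finiteness
  have hV : μ (ball (0 : E) 1) ≠ ∞ := measure_ball_lt_top.ne
  rw [← mul_div_assoc, ENNReal.le_div_iff_mul_le (Or.inl (measure_ball_pos μ 0 one_pos).ne')
    (Or.inl hV), mul_comm, ← ENNReal.limsup_const_mul_of_ne_top hV,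
    ← ENNReal.limsup_const_mul_of_ne_top hK]
  exact limsup_le_limsup (eventually_nhdsWithin_of_forall fun _ hε =>
    measure_ball_mul_sphereDiffQuot_le μ hT hc hsub hε)

end

end

theorem stmt3 (N d : ℕ) (q : ℝ) (hq : 1 ≤ q)
    (u : EuclideanSpace ℝ (Fin N) → EuclideanSpace ℝ (Fin d))
    (hu : MemLp u (ENNReal.ofReal q) volume)
    (A B : ℝ≥0∞)
    (hA : A = Filter.limsup (fun ε : ℝ =>
        ∫⁻ z in ball (0 : EuclideanSpace ℝ (Fin N)) 1,
          (∫⁻ x, ENNReal.ofReal (‖u (x + ε • z) - u x‖ ^ q)) /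
            ENNReal.ofReal (ε * ‖z‖)) (𝓝[>] (0 : ℝ)))
    (hB : B = Filter.limsup (fun ε : ℝ =>
        ⨆ (k : EuclideanSpace ℝ (Fin N)) (_ : ‖k‖ = 1),
          (∫⁻ x, ENNReal.ofReal (‖u (x + ε • k) - u x‖ ^ q)) /
            ENNReal.ofReal ε) (𝓝[>] (0 : ℝ))) :
    A / volume (ball (0 : EuclideanSpace ℝ (Fin N)) 1) ≤ B ∧
      B ≤ ENNReal.ofReal ((2 : ℝ) ^ ((N : ℝ) + q)) *
        (A / volume (ball (0 : EuclideanSpace ℝ (Fin N)) 1)) := by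
  subst hA hB
  set T := translationEnergy volume q u
  have hconst : (2 : ℝ≥0∞) ^ finrank ℝ (EuclideanSpace ℝ (Fin N)) * (2 * 2 ^ (q - 1)) =
      ENNReal.ofReal ((2 : ℝ) ^ ((N : ℝ) + q)) := by
    rw [finrank_euclideanSpace_fin, ← ENNReal.ofReal_rpow_of_pos two_pos, ENNReal.ofReal_ofNat,
      show (N : ℝ) + q = N + (1 + (q - 1)) by ring,
      ENNReal.rpow_add _ _ two_ne_zero ENNReal.ofNat_ne_top,
      ENNReal.rpow_add _ _ two_ne_zero ENNReal.ofNat_ne_top, ENNReal.rpow_one, ENNReal.rpow_natCast]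
  refine ⟨limsup_ballDiffQuot_div_le volume (T := T) (translationEnergy_zero _ (by linarith) u), ?_⟩
  calc limsup (sphereDiffQuot T) (𝓝[>] 0)
      ≤ 2 ^ finrank ℝ (EuclideanSpace ℝ (Fin N)) * (2 * 2 ^ (q - 1)) *
          (limsup (ballDiffQuot volume T) (𝓝[>] 0) / volume (ball 0 1)) :=
        limsup_sphereDiffQuot_le volume (measurable_translationEnergy hu.1 q) (by finiteness)
          (translationEnergy_add_le hu.1 hq)
    _ = _ := by rw [hconst]; rfl
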